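/- Let X ⊆ ℂ be a compact set, let γ : ℝ → ℂ be Lipschitz on [a,b] (a < b) with γ([a,b]) ⊆ X, and let φ, g : ℂ → ℂ be continuous on X with g a γ-derivative of φ on [a,b]. Then for every function f : ℂ → ℂ continuous on φ(γ([a,b])), writing σ := φ ∘ γ (which is Lipschitz on [a,b]), one has the change of variables formula ∫ t in a..b, f(φ(γ t)) * g(γ t) * deriv γ t = ∫ t in a..b, f(σ t) * deriv σ t; that is, ∫_γ (f ∘ φ)·g = ∫_{φ∘γ} f. -/

import Mathlib

open Set intervalIntegral Filter

noncomputable section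

/-- A path datum: a function `ℝ → ℂ` together with its parameter interval endpoints. -/
abbrev PathData := (ℝ → ℂ) × ℝ × ℝ

/-- `p` is a (rectifiable, modelled as Lipschitz) path in `X`. -/
def IsLipPathIn (X : Set ℂ) (p : PathData) : Prop :=
  p.2.1 < p.2.2 ∧ (∃ K : NNReal, LipschitzOnWith K p.1 (Set.Icc p.2.1 p.2.2)) ∧
    p.1 '' Set.Icc p.2.1 p.2.2 ⊆ X

/-- `g` is an `F`-derivative of `f`. -/
def IsFDeriv (F : Set PathData) (f g : ℂ → ℂ) : Prop :=
  ∀ p ∈ F, (∫ t in p.2.1..p.2.2, g (p.1 t) * deriv p.1 t) = f (p.1 p.2.2) - f (p.1 p.2.1)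

/-- `g` is a `γ`-derivative of `f` on `[a,b]`: the fundamental-theorem identity holds
along every closed subinterval of `[a,b]`. -/
def IsPathDeriv (γ : ℝ → ℂ) (a b : ℝ) (f g : ℂ → ℂ) : Prop :=
  ∀ c d : ℝ, a ≤ c → c ≤ d → d ≤ b →
    (∫ t in c..d, g (γ t) * deriv γ t) = f (γ d) - f (γ c)

/-- `γ` is admissible on `[a,b]`: nonconstant on every nondegenerate closed subinterval. -/
def AdmissiblePath (γ : ℝ → ℂ) (a b : ℝ) : Prop :=
  ∀ c d : ℝ, a ≤ c → c < d → d ≤ b →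
    ∃ s ∈ Set.Icc c d, ∃ t ∈ Set.Icc c d, γ s ≠ γ t

/-- `F` is closed under subpaths. -/
def ClosedUnderSubpaths (F : Set PathData) : Prop :=
  ∀ p ∈ F, ∀ c d : ℝ, p.2.1 ≤ c → c < d → d ≤ p.2.2 → ((p.1, c, d) : PathData) ∈ F

/-- `F` is an effective collection of paths in `X`. -/
def Effective (X : Set ℂ) (F : Set PathData) : Prop :=
  (∀ p ∈ F, IsLipPathIn X p ∧ AdmissiblePath p.1 p.2.1 p.2.2) ∧
  ClosedUnderSubpaths F ∧
  X ⊆ closure (⋃ p ∈ F, p.1 '' Set.Icc p.2.1 p.2.2)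

/-- The maximal collection `F^max` generated by `F`. -/
def MaxColl (X : Set ℂ) (F : Set PathData) : Set PathData :=
  {p | IsLipPathIn X p ∧ AdmissiblePath p.1 p.2.1 p.2.2 ∧
    ∀ f g : ℂ → ℂ, ContinuousOn f X → ContinuousOn g X → IsFDeriv F f g →
      IsPathDeriv p.1 p.2.1 p.2.2 f g}

/-- The uniform norm of `u` over `X`. -/
def supOn (u : ℂ → ℂ) (X : Set ℂ) : ℝ :=
  sSup ((fun x => ‖u x‖) '' X)

end

/-! The identity defining a `γ`-derivative says that `φ ∘ γ` is, on `[a, b]`, an indefinite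
integral of `(g ∘ γ) · γ'`, which is integrable because `γ'` is bounded by the Lipschitz constant.
By Lebesgue's differentiation theorem, `(φ ∘ γ)' = (g ∘ γ) · γ'` almost everywhere on `[a, b]`,
so the two integrands agree almost everywhere. -/

open MeasureTheory Topology Interval

section

variable {E : Type*} [NormedAddCommGroup E] [NormedSpace ℝ E] [CompleteSpace E]

theorem LipschitzOnWith.intervalIntegrable_deriv {γ : ℝ → E} {a b : ℝ}
    {K : NNReal} (hγ : LipschitzOnWith K γ (uIcc a b)) :
    IntervalIntegrable (deriv γ) volume a b := by
  refine (intervalIntegrable_const (c := (K : ℝ))).mono_fun'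
    (aestronglyMeasurable_deriv γ _) ?_
  have hends : ∀ᵐ t ∂volume.restrict (Ι a b), t ≠ max a b :=
    ae_restrict_of_ae (volume.ae_ne _)
  filter_upwards [ae_restrict_mem measurableSet_uIoc, hends] with t ht hne
  have ht' : t ∈ Ioo (min a b) (max a b) := ⟨ht.1, lt_of_le_of_ne ht.2 hne⟩
  exact norm_deriv_le_of_lipschitzOn (Icc_mem_nhds ht'.1 ht'.2) hγ

theorem ae_hasDerivAt_of_eq_add_integral {F h : ℝ → E} {a b : ℝ}
    (hh : IntervalIntegrable h volume a b)
    (hF : ∀ y ∈ Icc a b, F y = F a + ∫ t in a..y, h t) :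
    ∀ᵐ t, t ∈ Ioc a b → HasDerivAt F (h t) t := by
  filter_upwards [hh.ae_hasDerivAt_integral, volume.ae_ne b] with t hderiv hne ht
  have hab : a ≤ b := ht.1.le.trans ht.2
  have ht' : t ∈ Ioo a b := ⟨ht.1, lt_of_le_of_ne ht.2 hne⟩
  have hprim := hderiv (by simpa [uIcc_of_le hab] using Ioo_subset_Icc_self ht')
    a left_mem_uIcc
  refine (hprim.const_add (F a)).congr_of_eventuallyEq ?_
  filter_upwards [Ioo_mem_nhds ht'.1 ht'.2] with y hy
  exact hF y (Ioo_subset_Icc_self hy)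

end

theorem contourIntegral_comp_general (X : Set ℂ)
    (γ : ℝ → ℂ) (a b : ℝ) (hab : a < b) (K : NNReal)
    (hγ : LipschitzOnWith K γ (Set.Icc a b)) (him : γ '' Set.Icc a b ⊆ X)
    (φ g : ℂ → ℂ) (hg : ContinuousOn g X)
    (hd : IsPathDeriv γ a b φ g)
    (f : ℂ → ℂ) :
    (∫ t in a..b, f (φ (γ t)) * g (γ t) * deriv γ t) =
      ∫ t in a..b, f ((φ ∘ γ) t) * deriv (φ ∘ γ) t := by
  rw [← uIcc_of_le hab.le] at hγ him
  have hgγ : ContinuousOn (fun t => g (γ t)) (uIcc a b) :=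
    hg.comp hγ.continuousOn (mapsTo_iff_image_subset.2 him)
  have hintegrable : IntervalIntegrable (fun t => g (γ t) * deriv γ t) volume a b :=
    hγ.intervalIntegrable_deriv.continuousOn_mul hgγ
  have hprim : ∀ y ∈ Icc a b,
      (φ ∘ γ) y = (φ ∘ γ) a + ∫ t in a..y, g (γ t) * deriv γ t := fun y hy =>
    eq_add_of_sub_eq' (hd a y le_rfl hy.1 hy.2).symm
  refine integral_congr_ae ?_
  filter_upwards [ae_hasDerivAt_of_eq_add_integral hintegrable hprim] with t ht hmem
  rw [(ht (by rwa [uIoc_of_le hab.le] at hmem)).deriv, mul_assoc, Function.comp_apply]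

/-- Change of variables: `∫_γ (f ∘ φ)·g = ∫_{φ∘γ} f` when `g` is a
`γ`-derivative of `φ`. -/
theorem contourIntegral_comp (X : Set ℂ) (hX : IsCompact X)
    (γ : ℝ → ℂ) (a b : ℝ) (hab : a < b) (K : NNReal)
    (hγ : LipschitzOnWith K γ (Set.Icc a b)) (him : γ '' Set.Icc a b ⊆ X)
    (φ g : ℂ → ℂ) (hφ : ContinuousOn φ X) (hg : ContinuousOn g X)
    (hd : IsPathDeriv γ a b φ g)
    (f : ℂ → ℂ) (hf : ContinuousOn f (φ '' (γ '' Set.Icc a b))) :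
    (∫ t in a..b, f (φ (γ t)) * g (γ t) * deriv γ t) =
      ∫ t in a..b, f ((φ ∘ γ) t) * deriv (φ ∘ γ) t :=
  contourIntegral_comp_general X γ a b hab K hγ him φ g hg hd f
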